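/- Let D ⊂ ℝ³ be a bounded measurable set, y ∉ closure(D), and let Φ_p^j(x,y), j=1,2,3, be the columns of the p-part of the elastic fundamental tensor. Then there exist constants C > 0 and C' ≥ 0 such that Σ_{j=1}^{3} ‖∇Φ_p^j(·,y)‖²_{L²(D)} ≥ C ∫_D |x-y|⁻⁸ dx − C' ∫_D |x-y|⁻⁶ dx. -/

import Mathlib

open Complex MeasureTheory Metric

noncomputable section

abbrev E3 := EuclideanSpace ℝ (Fin 3)

/-- Partial derivative in the `l`-th coordinate direction. -/
def pd (l : Fin 3) (f : E3 → ℂ) (x : E3) : ℂ :=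
  fderiv ℝ f x (EuclideanSpace.single l 1)

/-- The fundamental solution of the Helmholtz equation in `ℝ³`. -/
def helmG (κ : ℝ) (y : E3) (x : E3) : ℂ :=
  Complex.exp (Complex.I * κ * ‖x - y‖) / (4 * Real.pi * ‖x - y‖)

/-!
If the profiles of a radial function `z ↦ φ₀ ‖z - y‖` satisfy `φₖ' r = r φₖ₊₁ r`, its third
partials at `x` are `φ₃ vⱼ vₗ vₘ + φ₂ (δₗₘ vⱼ + δⱼₘ vₗ + δⱼₗ vₘ)` with `v = x - y`, and the sum of
their squared moduli is `‖v‖² (|φ₃ ‖v‖² + 3 φ₂|² + 6 |φ₂|²)`. The Helmholtz kernel has such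
profiles, of the form `e^{iκr} P(r) / (4π r^n)` with explicit polynomials `P`, and for it the sum
is exactly `(90 + 18 s² + 3 s⁴ + s⁶) / (16 π² r⁸)` with `s = κ r`. The static part
`90 / (16 π² r⁸)` alone gives the bound, so `C = 90 / (16 π² κ⁴)` and `C' = 0` work. The
integrands are continuous on the compact set `closure D`, which avoids `y`.
-/

open Real Filter Topology

theorem norm_sub_pos_of_ne {F : Type*} [NormedAddCommGroup F] {x y : F} (h : x ≠ y) :
    0 < ‖x - y‖ :=
  norm_pos_iff.2 (sub_ne_zero.2 h)

theorem hasFDerivAt_norm_sub {F : Type*} [NormedAddCommGroup F] [InnerProductSpace ℝ F]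
    {x y : F} (hxy : x ≠ y) :
    HasFDerivAt (fun z => ‖z - y‖) (‖x - y‖⁻¹ • innerSL ℝ (x - y)) x := by
  have hr := norm_sub_pos_of_ne hxy
  have hsq := ((hasFDerivAt_id x).sub_const y).norm_sq
  have h := (Real.hasDerivAt_sqrt (pow_pos hr 2).ne').hasFDerivAt.comp x hsq
  have hfun : (fun z => ‖z - y‖) = (fun t => √t) ∘ fun z => ‖id z - y‖ ^ 2 := by
    ext z; simp
  rw [hfun]
  refine h.congr_fderiv ?_
  ext v
  simp only [sqrt_sq hr.le, id_eq, ContinuousLinearMap.comp_id, smul_apply,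
    ContinuousLinearMap.comp_apply, coe_innerSL_apply, ContinuousLinearMap.toSpanSingleton_apply,
    smul_eq_mul, nsmul_eq_mul, Nat.cast_ofNat]
  field_simp

section Partials

variable {x y : E3}

theorem pd_congr {f g : E3 → ℂ} (m : Fin 3) (h : f =ᶠ[𝓝 x] g) : pd m f x = pd m g x := by
  rw [pd, pd, h.fderiv_eq]

theorem pd_add {f g : E3 → ℂ} (m : Fin 3) (hf : DifferentiableAt ℝ f x)
    (hg : DifferentiableAt ℝ g x) : pd m (fun z => f z + g z) x = pd m f x + pd m g x := by
  simp [pd, fderiv_fun_add hf hg]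

theorem pd_mul {f g : E3 → ℂ} (m : Fin 3) (hf : DifferentiableAt ℝ f x)
    (hg : DifferentiableAt ℝ g x) :
    pd m (fun z => f z * g z) x = pd m f x * g x + f x * pd m g x := by
  simp only [pd, fderiv_fun_mul hf hg, add_apply, smul_apply, smul_eq_mul]
  ring

theorem pd_const_mul {f : E3 → ℂ} (m : Fin 3) (c : ℂ) (hf : DifferentiableAt ℝ f x) :
    pd m (fun z => c * f z) x = c * pd m f x := by
  simp [pd, fderiv_const_mul hf]

theorem differentiable_coord (y : E3) (j : Fin 3) :
    Differentiable ℝ fun z : E3 => (((z - y) j : ℝ) : ℂ) := by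
  fun_prop

theorem pd_coord (m j : Fin 3) :
    pd m (fun z : E3 => (((z - y) j : ℝ) : ℂ)) x = if j = m then 1 else 0 := by
  have h : HasFDerivAt (fun z : E3 => (((z - y) j : ℝ) : ℂ))
      (ofRealCLM.comp (EuclideanSpace.proj j)) x :=
    ofRealCLM.hasFDerivAt.comp x ((EuclideanSpace.proj j : E3 →L[ℝ] ℝ).hasFDerivAt.sub_const _)
  rw [pd, h.fderiv]
  simp [apply_ite ((↑) : ℝ → ℂ)]

theorem pd_radial {φ ψ : ℝ → ℂ} (m : Fin 3) (hxy : x ≠ y)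
    (hφ : HasDerivAt φ (‖x - y‖ * ψ ‖x - y‖) ‖x - y‖) :
    pd m (fun z => φ ‖z - y‖) x = ((x - y) m : ℂ) * ψ ‖x - y‖ := by
  have hr : (‖x - y‖ : ℂ) ≠ 0 := by simpa [sub_eq_zero] using hxy
  have h : HasFDerivAt (fun z => φ ‖z - y‖) _ x :=
    hφ.hasFDerivAt.comp x (hasFDerivAt_norm_sub hxy)
  rw [pd, h.fderiv]
  simp only [ContinuousLinearMap.comp_smulₛₗ, map_inv₀, ringHom_apply, smul_apply,
    ContinuousLinearMap.comp_apply, coe_innerSL_apply, EuclideanSpace.inner_single_right, one_mul,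
    ContinuousLinearMap.toSpanSingleton_apply, real_smul, ofReal_inv, PiLp.sub_apply, ofReal_sub]
  field_simp

theorem differentiableAt_radial {φ : ℝ → ℂ} (hxy : x ≠ y)
    (hφ : DifferentiableAt ℝ φ ‖x - y‖) :
    DifferentiableAt ℝ (fun z => φ ‖z - y‖) x :=
  hφ.comp x (hasFDerivAt_norm_sub hxy).differentiableAt

end Partials

def radialThirdPartial (v : E3) (a b : ℂ) (j l m : Fin 3) : ℂ :=
  a * v j * v l * v m + b * ((if l = m then 1 else 0) * v j + (if j = m then 1 else 0) * v l +
    (if j = l then 1 else 0) * v m)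

section RadialPartials

variable {φ₀ φ₁ φ₂ φ₃ : ℝ → ℂ} {x y : E3}

theorem pd_pd_radial (h₀ : ∀ r > 0, HasDerivAt φ₀ (r * φ₁ r) r)
    (h₁ : ∀ r > 0, HasDerivAt φ₁ (r * φ₂ r) r) (hxy : x ≠ y) (j l : Fin 3) :
    pd l (pd j fun z => φ₀ ‖z - y‖) x =
      ((x - y) j : ℂ) * (x - y) l * φ₂ ‖x - y‖ + (if j = l then 1 else 0) * φ₁ ‖x - y‖ := by
  have hr := norm_sub_pos_of_ne hxy
  have hev : (pd j fun z => φ₀ ‖z - y‖) =ᶠ[𝓝 x] fun z => ((z - y) j : ℂ) * φ₁ ‖z - y‖ :=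
    (eventually_ne_nhds hxy).mono fun z hz => pd_radial j hz (h₀ _ (norm_sub_pos_of_ne hz))
  rw [pd_congr l hev, pd_mul l (differentiable_coord y j x)
    (differentiableAt_radial hxy (h₁ _ hr).differentiableAt), pd_coord, pd_radial l hxy (h₁ _ hr)]
  ring

theorem pd_const_mul_pd_pd_radial (h₀ : ∀ r > 0, HasDerivAt φ₀ (r * φ₁ r) r)
    (h₁ : ∀ r > 0, HasDerivAt φ₁ (r * φ₂ r) r) (h₂ : ∀ r > 0, HasDerivAt φ₂ (r * φ₃ r) r)
    (c : ℂ) (hxy : x ≠ y) (j l m : Fin 3) :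
    pd m (fun z => c * pd l (pd j fun z => φ₀ ‖z - y‖) z) x =
      c * radialThirdPartial (x - y) (φ₃ ‖x - y‖) (φ₂ ‖x - y‖) j l m := by
  have hr := norm_sub_pos_of_ne hxy
  have hev : (fun z => c * pd l (pd j fun z => φ₀ ‖z - y‖) z) =ᶠ[𝓝 x] fun z =>
      c * (((z - y) j : ℂ) * (z - y) l * φ₂ ‖z - y‖ + (if j = l then 1 else 0) * φ₁ ‖z - y‖) :=
    (eventually_ne_nhds hxy).mono fun z hz => congrArg (c * ·) (pd_pd_radial h₀ h₁ hz j l)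
  have hu := differentiable_coord y
  have hR₁ := differentiableAt_radial hxy (h₁ _ hr).differentiableAt
  have hR₂ := differentiableAt_radial hxy (h₂ _ hr).differentiableAt
  have hul : DifferentiableAt ℝ (fun z => ((z - y) j : ℂ) * (z - y) l) x :=
    (hu j x).mul (hu l x)
  have hA : DifferentiableAt ℝ (fun z => ((z - y) j : ℂ) * (z - y) l * φ₂ ‖z - y‖) x :=
    hul.mul hR₂
  have hB : DifferentiableAt ℝ (fun z => (if j = l then 1 else 0 : ℂ) * φ₁ ‖z - y‖) x :=
    hR₁.const_mul _
  have hAB : DifferentiableAt ℝ (fun z => ((z - y) j : ℂ) * (z - y) l * φ₂ ‖z - y‖ +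
      (if j = l then 1 else 0 : ℂ) * φ₁ ‖z - y‖) x := hA.add hB
  rw [pd_congr m hev, pd_const_mul m c hAB, pd_add m hA hB, pd_mul m hul hR₂,
    pd_mul m (hu j x) (hu l x), pd_const_mul m _ hR₁, pd_coord, pd_coord,
    pd_radial m hxy (h₁ _ hr), pd_radial m hxy (h₂ _ hr), radialThirdPartial]
  ring

end RadialPartials

theorem sum_norm_sq_radialThirdPartial (v : E3) (a b : ℂ) :
    ∑ j, ∑ l, ∑ m, ‖radialThirdPartial v a b j l m‖ ^ 2 =
      ‖v‖ ^ 2 * (‖a * (‖v‖ ^ 2 : ℝ) + 3 * b‖ ^ 2 + 6 * ‖b‖ ^ 2) := by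
  rw [EuclideanSpace.real_norm_sq_eq]
  simp only [Fin.sum_univ_three, radialThirdPartial, Complex.sq_norm, Complex.normSq_apply,
    Fin.isValue, ↓reduceIte, Fin.reduceEq, one_mul, zero_mul, add_zero, zero_add, add_re, add_im,
    mul_re, mul_im, ofReal_re, ofReal_im, one_re, one_im, zero_re, zero_im, re_ofNat, im_ofNat,
    mul_zero, sub_zero]
  ring

theorem integral_le_sum_integral_of_le_sum {α ι : Type*} [MeasurableSpace α] [Fintype ι]
    {μ : Measure α} {g : α → ℝ} {f : ι → α → ℝ} (hg : 0 ≤ᵐ[μ] g)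
    (hf : ∀ i, AEStronglyMeasurable (f i) μ) (hf₀ : ∀ i x, 0 ≤ f i x)
    (hint : Integrable (fun x => ∑ i, f i x) μ) (hle : g ≤ᵐ[μ] fun x => ∑ i, f i x) :
    ∫ x, g x ∂μ ≤ ∑ i, ∫ x, f i x ∂μ := by
  have hfi : ∀ i, Integrable (f i) μ := fun i =>
    hint.mono' (hf i) (Eventually.of_forall fun x => by
      rw [Real.norm_of_nonneg (hf₀ i x)]
      exact Finset.single_le_sum (f := fun i => f i x) (fun i _ => hf₀ i x) (Finset.mem_univ i))
  rw [← integral_finsetSum _ fun i _ => hfi i]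
  exact integral_mono_of_nonneg hg hint hle

section Helmholtz

open Polynomial

def helmProfile (κ : ℝ) (P : ℂ[X]) (n : ℕ) (r : ℝ) : ℂ :=
  cexp (I * κ * r) * P.eval (r : ℂ) / (4 * π * r ^ n)

theorem hasDerivAt_helmProfile {κ r : ℝ} {P Q : ℂ[X]} {n : ℕ} (hr : r ≠ 0)
    (hQ : (I * κ * P.eval (r : ℂ) + P.derivative.eval (r : ℂ)) * r - n * P.eval (r : ℂ) =
      Q.eval (r : ℂ)) :
    HasDerivAt (helmProfile κ P n) (r * helmProfile κ Q (n + 2) r) r := by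
  have hrC : (r : ℂ) ≠ 0 := Complex.ofReal_ne_zero.2 hr
  have hexp : HasDerivAt (fun s : ℝ => cexp (I * κ * s)) (cexp (I * κ * r) * (I * κ)) r := by
    simpa using ((hasDerivAt_id r).ofReal_comp.const_mul (I * κ)).cexp
  have hden : HasDerivAt (fun s : ℝ => 4 * π * (s : ℂ) ^ n) (4 * π * (n * (r : ℂ) ^ (n - 1))) r :=
    ((hasDerivAt_id r).ofReal_comp.pow n).const_mul _ |>.congr_deriv (by simp)
  have hpow : (n : ℂ) * (r : ℂ) ^ (n - 1) * r = n * r ^ n := by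
    rcases n with _ | n
    · simp
    · simp [pow_succ, mul_assoc]
  refine ((hexp.mul (P.hasDerivAt (r : ℂ)).comp_ofReal).div hden
    (by simp [hrC, Real.pi_ne_zero])).congr_deriv ?_
  rw [Pi.mul_apply, helmProfile, ← hQ]
  field_simp
  linear_combination (-P.eval (r : ℂ) * (r : ℂ) ^ (n + 1)) * hpow

/- `helmPolyₖ₊₁ = X * (C (I * κ) * helmPolyₖ + derivative helmPolyₖ) - (2k + 1) * helmPolyₖ`
with `helmPoly₀ = 1`: the `Q` of `hasDerivAt_helmProfile`, so these give the successive profiles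
of `helmG`. -/
def helmPoly₁ (κ : ℝ) : ℂ[X] := C (I * κ) * X - 1

def helmPoly₂ (κ : ℝ) : ℂ[X] := 3 - C (3 * I * κ) * X - C ((κ : ℂ) ^ 2) * X ^ 2

def helmPoly₃ (κ : ℝ) : ℂ[X] :=
  -15 + C (15 * I * κ) * X + C (6 * (κ : ℂ) ^ 2) * X ^ 2 - C (I * κ ^ 3) * X ^ 3

theorem helmG_eq_helmProfile (κ : ℝ) (y : E3) :
    helmG κ y = fun z => helmProfile κ 1 1 ‖z - y‖ := by
  ext z
  simp [helmG, helmProfile]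

theorem pd_const_mul_pd_pd_helmG (κ : ℝ) (c : ℂ) {x y : E3} (hxy : x ≠ y) (j l m : Fin 3) :
    pd m (fun z => c * pd l (pd j (helmG κ y)) z) x = c * radialThirdPartial (x - y)
      (helmProfile κ (helmPoly₃ κ) 7 ‖x - y‖) (helmProfile κ (helmPoly₂ κ) 5 ‖x - y‖) j l m := by
  rw [helmG_eq_helmProfile]
  refine pd_const_mul_pd_pd_radial (fun r hr => hasDerivAt_helmProfile (Q := helmPoly₁ κ)
    hr.ne' ?_) (fun r hr => hasDerivAt_helmProfile hr.ne' ?_)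
    (fun r hr => hasDerivAt_helmProfile hr.ne' ?_) c hxy j l m
  all_goals simp only [helmPoly₁, helmPoly₂, helmPoly₃, eval_sub, eval_add, eval_neg, eval_mul,
    eval_pow, eval_C, eval_X, eval_zero, eval_one, eval_ofNat, derivative_sub, derivative_mul,
    derivative_C, derivative_X, derivative_X_sq, derivative_one, derivative_ofNat, Nat.cast_one]
  · ring
  · linear_combination ((κ : ℂ) * r) ^ 2 * I_sq
  · linear_combination -3 * ((κ : ℂ) * r) ^ 2 * I_sq

def helmThirdSqSum (κ r : ℝ) : ℝ :=
  (90 + 18 * (κ * r) ^ 2 + 3 * (κ * r) ^ 4 + (κ * r) ^ 6) / (16 * π ^ 2 * r ^ 8)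

theorem sum_norm_sq_pd_const_mul_pd_pd_helmG (κ : ℝ) (c : ℂ) {x y : E3} (hxy : x ≠ y) :
    ∑ j, ∑ l, ∑ m, ‖pd m (fun z => c * pd l (pd j (helmG κ y)) z) x‖ ^ 2 =
      ‖c‖ ^ 2 * helmThirdSqSum κ ‖x - y‖ := by
  simp only [pd_const_mul_pd_pd_helmG κ c hxy, norm_mul, mul_pow, ← Finset.mul_sum,
    sum_norm_sq_radialThirdPartial]
  congr 1
  set r := ‖x - y‖
  have hr : 0 < r := norm_sub_pos_of_ne hxy
  set e := cexp (I * κ * r) / (4 * π * r ^ 5)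
  have he : ‖e‖ = 1 / (4 * π * r ^ 5) := by
    have : I * κ * r = ((κ * r : ℝ) : ℂ) * I := by push_cast; ring
    rw [norm_div, this, norm_exp_ofReal_mul_I]
    norm_cast
    rw [Real.norm_of_nonneg (by positivity)]
  have hA : helmProfile κ (helmPoly₃ κ) 7 r * (r ^ 2 : ℝ) + 3 * helmProfile κ (helmPoly₂ κ) 5 r =
      e * ((-6 + 3 * (κ * r) ^ 2 : ℝ) + (6 * (κ * r) - (κ * r) ^ 3 : ℝ) * I) := by
    simp only [helmProfile, helmPoly₂, helmPoly₃, e, eval_sub, eval_add, eval_neg, eval_mul,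
      eval_pow, eval_C, eval_X, eval_ofNat]
    push_cast
    field_simp
    ring
  have hB : helmProfile κ (helmPoly₂ κ) 5 r =
      e * ((3 - (κ * r) ^ 2 : ℝ) + (-3 * (κ * r) : ℝ) * I) := by
    simp only [helmProfile, helmPoly₂, e, eval_sub, eval_mul, eval_pow, eval_C, eval_X,
      eval_ofNat]
    push_cast
    ring
  rw [hA, hB, helmThirdSqSum]
  simp only [norm_mul, mul_pow, he, Complex.sq_norm, Complex.normSq_add_mul_I]
  field_simp
  ring

end Helmholtz

theorem div_le_helmThirdSqSum (κ r : ℝ) : 90 / (16 * π ^ 2 * r ^ 8) ≤ helmThirdSqSum κ r := by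
  have : 0 ≤ 18 * (κ * r) ^ 2 + 3 * (κ * r) ^ 4 + (κ * r) ^ 6 := by positivity
  unfold helmThirdSqSum
  gcongr
  linarith

theorem integrableOn_helmThirdSqSum (κ : ℝ) {D : Set E3} (hD : Bornology.IsBounded D) {y : E3}
    (hy : y ∉ closure D) : IntegrableOn (fun x => helmThirdSqSum κ ‖x - y‖) D := by
  refine (ContinuousOn.integrableOn_compact hD.isCompact_closure ?_).mono_set subset_closure
  refine ContinuousOn.div (by fun_prop) (by fun_prop) fun x hx => ?_
  have := norm_sub_pos_of_ne fun (h : x = y) => hy (h ▸ hx)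
  positivity

/-- Lower bound for the summed `L²(D)` norms of the gradients of the columns `Φ_p^j`
of the `p`-part of the elastic fundamental tensor. -/
theorem gradient_L2_lower_bound_p_part (κ κp : ℝ) (hκ : κ ≠ 0) :
    ∃ C > (0 : ℝ), ∃ C' ≥ (0 : ℝ), ∀ D : Set E3, MeasurableSet D → Bornology.IsBounded D →
      ∀ y : E3, y ∉ closure D →
        C * (∫ x in D, 1 / ‖x - y‖ ^ 8) - C' * (∫ x in D, 1 / ‖x - y‖ ^ 6)
          ≤ ∑ j : Fin 3, ∫ x in D, ∑ l : Fin 3, ∑ m : Fin 3,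
              ‖pd m (fun z => -(1 / (κ : ℂ) ^ 2) * pd l (pd j (helmG κp y)) z) x‖ ^ 2 := by
  refine ⟨90 / (16 * π ^ 2 * κ ^ 4), by positivity, 0, le_rfl, fun D hD hDb y hyD => ?_⟩
  have hne : ∀ x ∈ D, x ≠ y := fun x hx hxy => hyD (hxy ▸ subset_closure hx)
  have hsum : ∀ x ∈ D, ∑ j : Fin 3, ∑ l : Fin 3, ∑ m : Fin 3,
      ‖pd m (fun z => -(1 / (κ : ℂ) ^ 2) * pd l (pd j (helmG κp y)) z) x‖ ^ 2 =
        1 / κ ^ 4 * helmThirdSqSum κp ‖x - y‖ := fun x hx => by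
    rw [sum_norm_sq_pd_const_mul_pd_pd_helmG κp _ (hne x hx)]
    simp [← pow_mul]
  rw [zero_mul, sub_zero, ← integral_const_mul]
  refine integral_le_sum_integral_of_le_sum (Eventually.of_forall fun x => by positivity)
    (fun j => (Finset.measurable_sum _ fun l _ => Finset.measurable_sum _ fun m _ =>
      (measurable_fderiv_apply_const ℝ _ _).norm.pow_const 2).aestronglyMeasurable)
    (fun j x => by positivity)
    (IntegrableOn.congr_fun ((integrableOn_helmThirdSqSum κp hDb hyD).const_mul _)
      (fun x hx => (hsum x hx).symm) hD)
    ((ae_restrict_iff' hD).2 (Eventually.of_forall fun x hx => ?_))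
  dsimp only
  rw [hsum x hx]
  calc 90 / (16 * π ^ 2 * κ ^ 4) * (1 / ‖x - y‖ ^ 8)
      = 1 / κ ^ 4 * (90 / (16 * π ^ 2 * ‖x - y‖ ^ 8)) := by ring
    _ ≤ 1 / κ ^ 4 * helmThirdSqSum κp ‖x - y‖ := by gcongr; exact div_le_helmThirdSqSum _ _

end
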